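/- arXiv:1604.02615 — 3 statements merged into one kernel-verified Lean document; each statement's English description precedes it below -/
import Mathlib

section
/- Multi-parameter Cramér-Rao bound: for an unbiased estimator θ̂ of a vector parameter θ ∈ ℝ^d of a finite probability distribution, the covariance matrix satisfies Cov(θ̂) ⪰ C(θ)⁻¹ in the Loewner order, where C(θ) is the (assumed invertible) Fisher information matrix. -/
/-!
Weight the outcomes by `W = diag p(·, θ)` and form the score matrix `S x i = ∂ᵢ log p(x, θ)` and
the error matrix `E x i = θ̂ᵢ(x) - θᵢ`. Then `Cov = Eᵀ W E` and `C = Sᵀ W S`, while differentiating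
`∑ₓ p = 1` and the derivative conditions on `θ̂` give `Sᵀ W E = 1`. Hence `Cov - C⁻¹ = Rᵀ W R` for
the residual `R = E - S C⁻¹` of regressing the error on the score, which is positive semidefinite.
-/

open Matrix

theorem Finset.sum_eq_zero_of_hasDerivAt_of_sum_const {ι 𝕜 : Type*} [NontriviallyNormedField 𝕜]
    (s : Finset ι) {f : ι → 𝕜 → 𝕜} {f' : ι → 𝕜} {a c : 𝕜}
    (hf : ∀ i ∈ s, HasDerivAt (f i) (f' i) a) (hc : ∀ t, ∑ i ∈ s, f i t = c) :
    ∑ i ∈ s, f' i = 0 := by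
  have hsum : HasDerivAt (fun t => ∑ i ∈ s, f i t) (∑ i ∈ s, f' i) a := HasDerivAt.fun_sum hf
  simp only [hc] at hsum
  exact hsum.unique (hasDerivAt_const a c)

namespace Matrix

theorem conjTranspose_mul_diagonal_mul_apply {m n α : Type*} [Fintype m] [DecidableEq m]
    [NonUnitalNonAssocSemiring α] [StarRing α] (A B : Matrix m n α) (w : m → α) (i j : n) :
    (Aᴴ * diagonal w * B) i j = ∑ x, star (A x i) * w x * B x j := by
  rw [mul_apply]
  simp only [mul_diagonal, conjTranspose_apply]

variable {m n : Type*} [Fintype m] [Fintype n] [DecidableEq n]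

theorem nonsing_inv_mul_mul_nonsing_inv {α : Type*} [CommRing α] (A : Matrix n n α) :
    A⁻¹ * A * A⁻¹ = A⁻¹ := by
  by_cases h : IsUnit A.det
  · rw [nonsing_inv_mul A h, Matrix.one_mul]
  · simp [nonsing_inv_apply_not_isUnit A h]

variable {𝕜 : Type*} [CommRing 𝕜] [StarRing 𝕜] [PartialOrder 𝕜]
  {W : Matrix m m 𝕜}

theorem PosSemidef.gram_sub_mul_inv_mul (hW : W.PosSemidef) (E S : Matrix m n 𝕜) :
    (Eᴴ * W * E - Eᴴ * W * S * (Sᴴ * W * S)⁻¹ * (Sᴴ * W * E)).PosSemidef := by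
  set G := Sᴴ * W * S
  have hG : G⁻¹ᴴ = G⁻¹ := (isHermitian_conjTranspose_mul_mul S hW.1).inv
  have hcancel : ∀ Y : Matrix n n 𝕜, G⁻¹ * (Sᴴ * (W * (S * (G⁻¹ * Y)))) = G⁻¹ * Y := fun Y => by
    conv_rhs => rw [← nonsing_inv_mul_mul_nonsing_inv G]
    simp only [G, Matrix.mul_assoc]
  have hR : (E - S * G⁻¹ * (Sᴴ * W * E))ᴴ * W * (E - S * G⁻¹ * (Sᴴ * W * E))
      = Eᴴ * W * E - Eᴴ * W * S * G⁻¹ * (Sᴴ * W * E) := by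
    simp only [conjTranspose_sub, conjTranspose_mul, conjTranspose_conjTranspose, hG, hW.1.eq,
      Matrix.sub_mul, Matrix.mul_sub, Matrix.mul_assoc, hcancel, sub_self, sub_zero]
  exact hR ▸ hW.conjTranspose_mul_mul_same _

theorem PosSemidef.gram_sub_inv_of_cross_eq_one (hW : W.PosSemidef) (E S : Matrix m n 𝕜)
    (hSE : Sᴴ * W * E = 1) : (Eᴴ * W * E - (Sᴴ * W * S)⁻¹).PosSemidef := by
  have hES : Eᴴ * W * S = 1 := by
    simpa only [conjTranspose_mul, conjTranspose_conjTranspose, hW.1.eq, conjTranspose_one,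
      Matrix.mul_assoc] using congrArg (fun M => Mᴴ) hSE
  simpa only [hSE, hES, Matrix.mul_one, Matrix.one_mul] using hW.gram_sub_mul_inv_mul E S

end Matrix

theorem multiparameter_cramer_rao_bound_general
    {X : Type*} [Fintype X] {d : ℕ}
    (p : X → (Fin d → ℝ) → ℝ) (p' : X → Fin d → ℝ) (θ : Fin d → ℝ)
    (est : X → Fin d → ℝ)
    (C Cov : Matrix (Fin d) (Fin d) ℝ)
    (hpos : ∀ x, 0 < p x θ)
    (hsum : ∀ t, ∑ x, p x t = 1)
    (hderiv : ∀ x i, HasDerivAt (fun s : ℝ => p x (Function.update θ i s)) (p' x i) (θ i))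
    (hunbiased' : ∀ i j, ∑ x, p' x i * est x j = if i = j then (1:ℝ) else 0)
    (hC : ∀ i j, C i j = ∑ x, p x θ * (p' x i / p x θ) * (p' x j / p x θ))
    (hCov : ∀ i j, Cov i j = ∑ x, p x θ * (est x i - θ i) * (est x j - θ j)) :
    (Cov - C⁻¹).PosSemidef := by
  classical
  let W : Matrix X X ℝ := diagonal fun x => p x θ
  let score : Matrix X (Fin d) ℝ := of fun x i => p' x i / p x θ
  let error : Matrix X (Fin d) ℝ := of fun x i => est x i - θ i
  have hscore : ∀ i, ∑ x, p' x i = 0 := fun i =>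
    Finset.univ.sum_eq_zero_of_hasDerivAt_of_sum_const (fun x _ => hderiv x i) fun _ => hsum _
  have hcross : scoreᴴ * W * error = 1 := by
    ext i j
    have h : ∀ x, p' x i / p x θ * p x θ * (est x j - θ j) = p' x i * est x j - θ j * p' x i :=
      fun x => by field_simp [(hpos x).ne']
    simp only [conjTranspose_mul_diagonal_mul_apply, W, score, error, of_apply, star_trivial, h,
      Finset.sum_sub_distrib, ← Finset.mul_sum, hscore, hunbiased', one_apply, mul_zero, sub_zero]
  have hC' : C = scoreᴴ * W * score := by
    ext i j
    simp only [hC, conjTranspose_mul_diagonal_mul_apply, W, score, of_apply, star_trivial]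
    exact Finset.sum_congr rfl fun x _ => by ring
  have hCov' : Cov = errorᴴ * W * error := by
    ext i j
    simp only [hCov, conjTranspose_mul_diagonal_mul_apply, W, error, of_apply, star_trivial]
    exact Finset.sum_congr rfl fun x _ => by ring
  rw [hC', hCov']
  exact (posSemidef_diagonal_iff.mpr fun x => (hpos x).le).gram_sub_inv_of_cross_eq_one _ _ hcross

/-- Multi-parameter Cramér-Rao bound: for an unbiased estimator of
`θ ∈ ℝ^d`, the covariance matrix dominates the inverse of the (invertible)
Fisher information matrix in the Loewner order. -/
theorem multiparameter_cramer_rao_bound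
    {X : Type*} [Fintype X] {d : ℕ}
    (p : X → (Fin d → ℝ) → ℝ) (p' : X → Fin d → ℝ) (θ : Fin d → ℝ)
    (est : X → Fin d → ℝ)
    (C Cov : Matrix (Fin d) (Fin d) ℝ)
    (hpos : ∀ x, 0 < p x θ)
    (hsum : ∀ t, ∑ x, p x t = 1)
    (hderiv : ∀ x i, HasDerivAt (fun s : ℝ => p x (Function.update θ i s)) (p' x i) (θ i))
    (hunbiased : ∀ i, ∑ x, p x θ * est x i = θ i)
    (hunbiased' : ∀ i j, ∑ x, p' x i * est x j = if i = j then (1:ℝ) else 0)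
    (hC : ∀ i j, C i j = ∑ x, p x θ * (p' x i / p x θ) * (p' x j / p x θ))
    (hCinv : IsUnit C)
    (hCov : ∀ i j, Cov i j = ∑ x, p x θ * (est x i - θ i) * (est x j - θ j)) :
    (Cov - C⁻¹).PosSemidef :=
  multiparameter_cramer_rao_bound_general p p' θ est C Cov hpos hsum hderiv hunbiased' hC hCov
end

section
/- Monotonicity of Fisher information under post-processing (data processing inequality): if q(y,θ) = ∑_x K(y|x) p(x,θ) for a stochastic kernel K independent of θ, then the Fisher information of q is at most the Fisher information of p: C_q(θ) ≤ C_p(θ). -/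
/-- Data-processing inequality for Fisher information: post-processing
by a parameter-independent stochastic kernel `K` cannot increase the Fisher
information: `C_q(θ) ≤ C_p(θ)` for `q(y,θ) = ∑_x K(y|x) p(x,θ)`. -/
theorem fisher_information_data_processing
    {X Y : Type*} [Fintype X] [Fintype Y]
    (p : X → ℝ → ℝ) (p' : X → ℝ) (K : Y → X → ℝ) (θ : ℝ)
    (hpos : ∀ x, 0 < p x θ)
    (hsum : ∀ t : ℝ, ∑ x, p x t = 1)
    (hderiv : ∀ x, HasDerivAt (p x) (p' x) θ)
    (hKnonneg : ∀ y x, 0 ≤ K y x)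
    (hKsum : ∀ x, ∑ y, K y x = 1)
    (hqpos : ∀ y, 0 < ∑ x, K y x * p x θ) :
    ∑ y, (∑ x, K y x * p' x)^2 / (∑ x, K y x * p x θ)
      ≤ ∑ x, (p' x)^2 / p x θ := by
  have key : ∀ y, (∑ x, K y x * p' x)^2 / (∑ x, K y x * p x θ)
      ≤ ∑ x, K y x * ((p' x)^2 / p x θ) := by
    intro y
    rw [div_le_iff₀ (hqpos y)]
    have hcs := Finset.sum_mul_sq_le_sq_mul_sq Finset.univ
      (fun x => Real.sqrt (K y x * p x θ))
      (fun x => Real.sqrt (K y x / p x θ) * p' x)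
    have heq : ∀ x : X, Real.sqrt (K y x * p x θ) * (Real.sqrt (K y x / p x θ) * p' x)
        = K y x * p' x := by
      intro x
      have : Real.sqrt (K y x * p x θ) * Real.sqrt (K y x / p x θ)
          = Real.sqrt ((K y x * p x θ) * (K y x / p x θ)) :=
        (Real.sqrt_mul (mul_nonneg (hKnonneg y x) (hpos x).le) _).symm
      rw [← mul_assoc, this]
      have h2 : (K y x * p x θ) * (K y x / p x θ) = (K y x)^2 := by
        rw [div_eq_mul_inv, mul_mul_mul_comm, mul_inv_cancel₀ (hpos x).ne', mul_one, sq]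
      rw [h2, Real.sqrt_sq (hKnonneg y x)]
    calc (∑ x, K y x * p' x)^2
        = (∑ x, Real.sqrt (K y x * p x θ) * (Real.sqrt (K y x / p x θ) * p' x))^2 := by
          rw [Finset.sum_congr rfl fun x _ => heq x]
      _ ≤ (∑ x, (Real.sqrt (K y x * p x θ))^2) * (∑ x, (Real.sqrt (K y x / p x θ) * p' x)^2) :=
          hcs
      _ = (∑ x, K y x * p x θ) * (∑ x, K y x * ((p' x)^2 / p x θ)) := by
          congr 1
          · exact Finset.sum_congr rfl fun x _ => Real.sq_sqrt (mul_nonneg (hKnonneg y x) (hpos x).le)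
          · refine Finset.sum_congr rfl fun x _ => ?_
            rw [mul_pow, Real.sq_sqrt (div_nonneg (hKnonneg y x) (hpos x).le)]
            field_simp
      _ = (∑ x, K y x * ((p' x)^2 / p x θ)) * (∑ x, K y x * p x θ) := mul_comm _ _
  calc ∑ y, (∑ x, K y x * p' x)^2 / (∑ x, K y x * p x θ)
      ≤ ∑ y, ∑ x, K y x * ((p' x)^2 / p x θ) :=
        Finset.sum_le_sum fun y _ => key y
    _ = ∑ x, (∑ y, K y x) * ((p' x)^2 / p x θ) := by
        rw [Finset.sum_comm]
        exact Finset.sum_congr rfl fun x _ => (Finset.sum_mul ..).symm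
    _ = ∑ x, (p' x)^2 / p x θ := by
        exact Finset.sum_congr rfl fun x _ => by rw [hKsum x, one_mul]
end

section
/- Quantum Cramér-Rao bound for a single parameter (measurement step): for any POVM {Π_x} on ℂ^n and any family of density matrices ρ_θ with SLD L (i.e., Lρ_θ + ρ_θ L = 2 ∂_θ ρ_θ), the classical Fisher information of the outcome distribution p(x,θ) = Tr(ρ_θ Π_x) satisfies C(θ) ≤ Tr(ρ_θ L²). -/
/-!
Taking real parts of `2 Tr(DΠ) = Tr(LρΠ) + Tr(ρLΠ)`, whose two terms are complex conjugates,
gives `Re Tr(DΠ) = Re Tr(ΠLρ)`. Writing `Π = QᴴQ`, this is the real part of `⟪Q, QL⟫` for the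
Hilbert–Schmidt form `⟪A, B⟫ = Tr(BρAᴴ)` weighted by `ρ`, so Cauchy–Schwarz bounds its square by
`Tr(ρΠ) · Tr(ΠLρL)`. Dividing by `p = Tr(ρΠ)` and summing over the outcomes with `∑ Π = 1`
leaves `Tr(LρL) = Tr(ρL²)`.
-/

open Matrix
open scoped ComplexOrder

namespace Matrix

variable {𝕜 n : Type*} [RCLike 𝕜] [Fintype n]

open RCLike

theorem re_trace_mul_mul_conjTranspose_sq_le {ρ : Matrix n n 𝕜} (hρ : ρ.PosSemidef)
    (x y : Matrix n n 𝕜) :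
    re (y * ρ * xᴴ).trace ^ 2 ≤ re (x * ρ * xᴴ).trace * re (y * ρ * yᴴ).trace := by
  let _ := ρ.toMatrixSeminormedAddCommGroup hρ
  let _ := ρ.toMatrixInnerProductSpace hρ
  have hcs := inner_mul_inner_self_le (𝕜 := 𝕜) x y
  rw [norm_inner_symm y x, ← sq] at hcs
  exact (sq_le_sq' (neg_le_of_abs_le (abs_re_le_norm _)) (re_le_norm _)).trans hcs

theorem re_trace_mul_mul_sq_le [DecidableEq n] {P ρ L : Matrix n n 𝕜} (hP : P.PosSemidef)
    (hρ : ρ.PosSemidef) (hL : L.IsHermitian) :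
    re (P * L * ρ).trace ^ 2 ≤ re (ρ * P).trace * re (P * (L * ρ * L)).trace := by
  open scoped MatrixOrder in
  obtain ⟨Q, rfl⟩ := CStarAlgebra.nonneg_iff_eq_star_mul_self.mp hP.nonneg
  have h := re_trace_mul_mul_conjTranspose_sq_le hρ Q (Q * L)
  simp only [conjTranspose_mul, hL.eq, ← Matrix.mul_assoc] at h
  rw [trace_mul_comm _ Qᴴ, trace_mul_comm _ Qᴴ, trace_mul_comm _ Qᴴ] at h
  rw [trace_mul_comm ρ]
  simpa only [Matrix.mul_assoc, star_eq_conjTranspose] using h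

theorem re_trace_mul_mul_comm {A B P : Matrix n n 𝕜} (hA : A.IsHermitian) (hB : B.IsHermitian)
    (hP : P.IsHermitian) : re (A * B * P).trace = re (B * A * P).trace := by
  rw [← conj_re, ← star_def, ← trace_conjTranspose, conjTranspose_mul, conjTranspose_mul,
    hA.eq, hB.eq, hP.eq, trace_mul_comm]

theorem re_trace_mul_eq_of_add_eq_two_smul {D P ρ L : Matrix n n 𝕜} (hP : P.IsHermitian)
    (hρ : ρ.IsHermitian) (hL : L.IsHermitian) (hSLD : L * ρ + ρ * L = (2 : 𝕜) • D) :
    re (D * P).trace = re (P * L * ρ).trace := by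
  have h : (2 : 𝕜) * (D * P).trace = (L * ρ * P).trace + (ρ * L * P).trace := by
    rw [← smul_eq_mul, ← trace_smul, ← smul_mul_assoc, ← hSLD, add_mul, trace_add]
  have h_re := congrArg re h
  rw [ofNat_mul_re, map_add, re_trace_mul_mul_comm hρ hL hP, trace_mul_comm (L * ρ)] at h_re
  rw [Matrix.mul_assoc]
  linarith

theorem sum_trace_mul_of_sum_eq_one [DecidableEq n] {X : Type*} [Fintype X]
    {P : X → Matrix n n 𝕜} (hP : ∑ x, P x = 1) (M : Matrix n n 𝕜) :
    ∑ x, (P x * M).trace = M.trace := by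
  rw [← trace_sum, ← Finset.sum_mul, hP, Matrix.one_mul]

end Matrix

theorem quantum_cramer_rao_measurement_general
    {n : ℕ} {X : Type*} [Fintype X]
    (Pi : X → Matrix (Fin n) (Fin n) ℂ)
    (ρ D L : Matrix (Fin n) (Fin n) ℂ)
    (hPipos : ∀ x, (Pi x).PosSemidef)
    (hPisum : ∑ x, Pi x = 1)
    (hρ : ρ.PosDef)
    (hL : L.IsHermitian)
    (hSLD : L * ρ + ρ * L = (2 : ℂ) • D)
    (hppos : ∀ x, 0 < ((ρ * Pi x).trace).re) :
    ∑ x, (((D * Pi x).trace).re)^2 / ((ρ * Pi x).trace).re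
      ≤ ((ρ * (L * L)).trace).re := by
  have hQFI : ∑ x, (Pi x * (L * ρ * L)).trace.re = (ρ * (L * L)).trace.re := by
    rw [← Complex.re_sum, sum_trace_mul_of_sum_eq_one hPisum, trace_mul_comm, ← Matrix.mul_assoc,
      trace_mul_comm]
  rw [← hQFI]
  refine Finset.sum_le_sum fun x _ => ?_
  have h := re_trace_mul_mul_sq_le (hPipos x) hρ.posSemidef hL
  rw [← re_trace_mul_eq_of_add_eq_two_smul (hPipos x).isHermitian hρ.isHermitian hL hSLD] at h
  rw [div_le_iff₀' (hppos x)]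
  exact h

/-- Quantum Cramér-Rao bound, measurement step: for any POVM `Pi` and a
density matrix `ρ` with Hermitian derivative `D` and SLD `L` (so `Lρ + ρL = 2D`),
the classical Fisher information of the outcome distribution `p x = Tr(ρ Pi_x)`
is at most the quantum Fisher information `Tr(ρ L²)`. -/
theorem quantum_cramer_rao_measurement
    {n : ℕ} {X : Type*} [Fintype X]
    (Pi : X → Matrix (Fin n) (Fin n) ℂ)
    (ρ D L : Matrix (Fin n) (Fin n) ℂ)
    (hPipos : ∀ x, (Pi x).PosSemidef)
    (hPisum : ∑ x, Pi x = 1)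
    (hρ : ρ.PosDef) (htr : ρ.trace = 1)
    (hD : D.IsHermitian) (hL : L.IsHermitian)
    (hSLD : L * ρ + ρ * L = (2 : ℂ) • D)
    (hppos : ∀ x, 0 < ((ρ * Pi x).trace).re) :
    ∑ x, (((D * Pi x).trace).re)^2 / ((ρ * Pi x).trace).re
      ≤ ((ρ * (L * L)).trace).re :=
  quantum_cramer_rao_measurement_general Pi ρ D L hPipos hPisum hρ hL hSLD hppos
end
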